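/- Under the same bivariate normal model, with G = (θ̂ - θ)/(σ v_θ^{1/2}) and θ̃ = θ̂ - ρσ v_θ^{1/2} k(γ̂), the variance of θ̃ equals σ² v_θ [1 - 2ρ² ∫ k(z)(z - γ)φ(z - γ) dz + ρ² ∫ (k(z) - m_k(γ))² φ(z - γ) dz], where m_k(γ) = ∫ k(z)φ(z - γ) dz and all integrals are over the real line. -/

import Mathlib

open MeasureTheory Real Filter Topology ProbabilityTheory

/-- standard normal density -/
noncomputable def stdφ (x : ℝ) : ℝ := Real.exp (-x ^ 2 / 2) / Real.sqrt (2 * Real.pi)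

/-- standard normal cumulative distribution function -/
noncomputable def stdΦ (x : ℝ) : ℝ := ∫ t in Set.Iic x, stdφ t

/-- density of the bivariate normal distribution with means `m1, m2`,
standard deviations `s1, s2` and correlation `ρ` -/
noncomputable def bvnPdf (m1 m2 s1 s2 ρ : ℝ) (p : ℝ × ℝ) : ℝ :=
  (2 * Real.pi * s1 * s2 * Real.sqrt (1 - ρ ^ 2))⁻¹ *
    Real.exp (-(1 / (2 * (1 - ρ ^ 2))) *
      (((p.1 - m1) / s1) ^ 2 - 2 * ρ * ((p.1 - m1) / s1) * ((p.2 - m2) / s2) +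
        ((p.2 - m2) / s2) ^ 2))

/-- the function k -/
noncomputable def kfun (d γ : ℝ) : ℝ := ∫ z in (-d)..d, z * stdφ (z - γ)

/-- the function m_k -/
noncomputable def mkfun (d γ : ℝ) : ℝ := ∫ z, kfun d z * stdφ (z - γ)

/-!
Write `s = σ √vθ`. The joint density factors as `φ(y - γ)` times the normal density in `x` with
mean `θ + ρ s (y - γ)` and variance `s² (1 - ρ²)`: this is the conditional law of `θ̂` given
`γ̂ = y`. Integrating out `x` first (Fubini) turns the mean and the second moment of
`θ̂ - ρ s k(γ̂)` into Gaussian integrals in `γ̂` alone. The mean is `θ - ρ s m_k(γ)`, and the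
variance is `s² (1 - ρ²) + ρ² s² E[((γ̂ - γ) - (k(γ̂) - m_k(γ)))²]`, which expands into the
stated formula since `E[(γ̂ - γ)²] = 1` and `E[γ̂ - γ] = 0`.
-/

open scoped NNReal ENNReal

section GaussianMoments

variable {μ : ℝ} {v : ℝ≥0}

lemma memLp_sub_gaussianReal (a : ℝ) : MemLp (fun x => x - a) 2 (gaussianReal μ v) :=
  (memLp_id_gaussianReal' 2 ENNReal.ofNat_ne_top).sub (memLp_const a)

lemma integral_sub_gaussianReal (a : ℝ) : ∫ x, (x - a) ∂gaussianReal μ v = μ - a := by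
  have hid : Integrable (fun x => x) (gaussianReal μ v) :=
    (memLp_id_gaussianReal 1).integrable le_rfl
  rw [integral_sub hid (integrable_const a)]
  simp

lemma integral_sub_sq_gaussianReal (a : ℝ) :
    ∫ x, (x - a) ^ 2 ∂gaussianReal μ v = v + (μ - a) ^ 2 := by
  have h := variance_eq_sub (memLp_sub_gaussianReal (μ := μ) (v := v) a)
  rw [variance_sub_const (X := fun x => x) measurable_id.aestronglyMeasurable,
    variance_fun_id_gaussianReal, integral_sub_gaussianReal] at h
  simp only [Pi.pow_apply] at h
  linarith

lemma integral_gaussianReal_eq_integral_mul (hv : v ≠ 0) (f : ℝ → ℝ) :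
    ∫ x, f x ∂gaussianReal μ v = ∫ x, gaussianPDFReal μ v x * f x :=
  integral_gaussianReal_eq_integral_smul hv

lemma integrable_gaussianReal_iff (hv : v ≠ 0) {f : ℝ → ℝ} :
    Integrable f (gaussianReal μ v) ↔ Integrable (fun x => gaussianPDFReal μ v x * f x) := by
  rw [gaussianReal_of_var_ne_zero _ hv, integrable_withDensity_iff_integrable_smul'
    (measurable_gaussianPDF _ _) (ae_of_all _ fun _ => gaussianPDF_lt_top)]
  simp [toReal_gaussianPDF]

end GaussianMoments

lemma integral_sub_sq_of_memLp {α : Type*} [MeasurableSpace α] {μ : Measure α} {u v : α → ℝ}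
    (hu : MemLp u 2 μ) (hv : MemLp v 2 μ) :
    ∫ x, (u x - v x) ^ 2 ∂μ = ∫ x, u x ^ 2 ∂μ - 2 * ∫ x, u x * v x ∂μ + ∫ x, v x ^ 2 ∂μ := by
  have huv : Integrable (fun x => 2 * (u x * v x)) μ := (hu.integrable_mul hv).const_mul 2
  have hsub : Integrable (fun x => u x ^ 2 - 2 * (u x * v x)) μ := hu.integrable_sq.sub huv
  simp_rw [sub_sq, mul_assoc]
  rw [integral_add hsub hv.integrable_sq, integral_sub hu.integrable_sq huv, integral_const_mul]

lemma integral_sub_sub_integral_sq_gaussianReal {γ : ℝ} {h : ℝ → ℝ}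
    (hh : MemLp h 2 (gaussianReal γ 1)) :
    ∫ y, ((y - γ) - (h y - ∫ z, h z ∂gaussianReal γ 1)) ^ 2 ∂gaussianReal γ 1 =
      1 - 2 * ∫ y, h y * (y - γ) ∂gaussianReal γ 1 +
        ∫ y, (h y - ∫ z, h z ∂gaussianReal γ 1) ^ 2 ∂gaussianReal γ 1 := by
  set m := ∫ z, h z ∂gaussianReal γ 1
  have hu := memLp_sub_gaussianReal (μ := γ) (v := 1) γ
  have hcross : ∫ y, (y - γ) * (h y - m) ∂gaussianReal γ 1 =
      ∫ y, h y * (y - γ) ∂gaussianReal γ 1 := by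
    have hprod : Integrable (fun y => (y - γ) * h y) (gaussianReal γ 1) := hu.integrable_mul hh
    calc ∫ y, (y - γ) * (h y - m) ∂gaussianReal γ 1
        = ∫ y, ((y - γ) * h y - m * (y - γ)) ∂gaussianReal γ 1 := by congr 1 with y; ring
      _ = ∫ y, h y * (y - γ) ∂gaussianReal γ 1 := by
        rw [integral_sub hprod ((hu.integrable one_le_two).const_mul m), integral_const_mul,
          integral_sub_gaussianReal, sub_self, mul_zero, sub_zero]
        simp_rw [mul_comm]
  rw [integral_sub_sq_of_memLp (v := fun y => h y - m) hu (hh.sub (memLp_const m)),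
    integral_sub_sq_gaussianReal, hcross]
  simp

lemma integral_comp_of_map_eq_withDensity {α Ω : Type*} [MeasurableSpace α] [MeasurableSpace Ω]
    {P : Measure Ω} {μ : Measure α} {X : Ω → α} (hX : AEMeasurable X P) {f : α → ℝ}
    (hf : Measurable f) (hf₀ : ∀ a, 0 ≤ f a)
    (hlaw : P.map X = μ.withDensity fun a => ENNReal.ofReal (f a)) (F : α → ℝ)
    (hF : AEStronglyMeasurable F (P.map X)) :
    ∫ ω, F (X ω) ∂P = ∫ a, f a * F a ∂μ := by
  rw [← integral_map hX hF, hlaw, integral_withDensity_eq_integral_toReal_smul hf.ennreal_ofReal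
    (ae_of_all _ fun _ => ENNReal.ofReal_lt_top)]
  simp_rw [ENNReal.toReal_ofReal (hf₀ _), smul_eq_mul]

@[fun_prop]
lemma continuous_stdφ : Continuous stdφ := by
  unfold stdφ
  fun_prop

lemma stdφ_nonneg (x : ℝ) : 0 ≤ stdφ x := by
  unfold stdφ
  positivity

lemma stdφ_le_one (x : ℝ) : stdφ x ≤ 1 := by
  unfold stdφ
  rw [div_le_one (by positivity)]
  calc rexp (-x ^ 2 / 2) ≤ 1 := exp_le_one_iff.2 (by nlinarith [sq_nonneg x])
    _ ≤ √(2 * π) := one_le_sqrt.2 (by linarith [pi_gt_three])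

lemma stdφ_sub_eq_gaussianPDFReal (γ y : ℝ) : stdφ (y - γ) = gaussianPDFReal γ 1 y := by
  simp [stdφ, gaussianPDFReal, div_eq_inv_mul]

lemma integral_mul_stdφ_sub_eq_integral_gaussianReal (γ : ℝ) (f : ℝ → ℝ) :
    ∫ y, f y * stdφ (y - γ) = ∫ y, f y ∂gaussianReal γ 1 := by
  simp only [integral_gaussianReal_eq_integral_mul one_ne_zero, stdφ_sub_eq_gaussianPDFReal,
    mul_comm]

lemma continuous_kfun (d : ℝ) : Continuous (kfun d) :=
  intervalIntegral.continuous_parametric_intervalIntegral_of_continuous' (by fun_prop) (-d) d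

lemma abs_kfun_le (d y : ℝ) : |kfun d y| ≤ 2 * d ^ 2 := by
  have hbound : ∀ z ∈ Set.uIoc (-d) d, ‖z * stdφ (z - y)‖ ≤ |d| := by
    intro z hz
    have hz' : |z| ≤ |d| := by
      rcases Set.mem_uIoc.1 hz with ⟨h₁, h₂⟩ | ⟨h₁, h₂⟩ <;> cases abs_cases d <;>
        exact abs_le.2 ⟨by linarith, by linarith⟩
    rw [norm_mul, Real.norm_eq_abs, Real.norm_of_nonneg (stdφ_nonneg _)]
    simpa using mul_le_mul hz' (stdφ_le_one _) (stdφ_nonneg _) (abs_nonneg d)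
  calc |kfun d y| ≤ |d| * |d - -d| := intervalIntegral.norm_integral_le_of_norm_le_const hbound
    _ = 2 * d ^ 2 := by
      rw [sub_neg_eq_add, ← two_mul, abs_mul, mul_left_comm, abs_mul_abs_self]
      norm_num
      ring

lemma memLp_kfun (d : ℝ) {μ : Measure ℝ} [IsFiniteMeasure μ] (p : ℝ≥0∞) : MemLp (kfun d) p μ :=
  MemLp.of_bound (continuous_kfun d).aestronglyMeasurable (2 * d ^ 2)
    (ae_of_all _ fun y => (Real.norm_eq_abs _).trans_le (abs_kfun_le d y))

lemma continuous_bvnPdf (m₁ m₂ s₁ s₂ ρ : ℝ) : Continuous (bvnPdf m₁ m₂ s₁ s₂ ρ) := by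
  unfold bvnPdf
  fun_prop

noncomputable def bvnCondVar (s ρ : ℝ) : ℝ≥0 := (s ^ 2 * (1 - ρ ^ 2)).toNNReal

section BivariateNormal

variable {θ γ s ρ : ℝ}

lemma coe_bvnCondVar (hρ : ρ ^ 2 ≤ 1) : (bvnCondVar s ρ : ℝ) = s ^ 2 * (1 - ρ ^ 2) :=
  Real.coe_toNNReal _ (mul_nonneg (sq_nonneg s) (sub_nonneg.2 hρ))

lemma bvnCondVar_ne_zero (hs : s ≠ 0) (hρ : ρ ^ 2 < 1) : bvnCondVar s ρ ≠ 0 :=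
  (Real.toNNReal_pos.2 (mul_pos (by positivity) (sub_pos.2 hρ))).ne'

lemma bvnPdf_eq_mul (hs : 0 < s) (hρ : ρ ^ 2 < 1) (x y : ℝ) :
    bvnPdf θ γ s 1 ρ (x, y) =
      gaussianPDFReal γ 1 y * gaussianPDFReal (θ + ρ * s * (y - γ)) (bvnCondVar s ρ) x := by
  have hs₀ : s ≠ 0 := hs.ne'
  have hρ₀ : 1 - ρ ^ 2 ≠ 0 := (sub_pos.2 hρ).ne'
  have hsqrt : √(2 * π * 1) * √(2 * π * (s ^ 2 * (1 - ρ ^ 2))) = 2 * π * s * √(1 - ρ ^ 2) := by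
    rw [← sqrt_mul (by positivity), show 2 * π * 1 * (2 * π * (s ^ 2 * (1 - ρ ^ 2))) =
      (2 * π * s) ^ 2 * (1 - ρ ^ 2) by ring, sqrt_mul (by positivity), sqrt_sq (by positivity)]
  simp only [bvnPdf, gaussianPDFReal, NNReal.coe_one, coe_bvnCondVar hρ.le]
  rw [mul_mul_mul_comm, ← mul_inv, hsqrt, ← Real.exp_add]
  congr 2
  · ring
  · field_simp
    ring

lemma bvnPdf_nonneg (hs : 0 < s) (hρ : ρ ^ 2 < 1) (p : ℝ × ℝ) : 0 ≤ bvnPdf θ γ s 1 ρ p := by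
  rw [← p.eta, bvnPdf_eq_mul hs hρ]
  exact mul_nonneg (gaussianPDFReal_nonneg _ _ _) (gaussianPDFReal_nonneg _ _ _)

lemma integral_bvnPdf_mul (hs : 0 < s) (hρ : ρ ^ 2 < 1) {F : ℝ × ℝ → ℝ}
    (hF : Integrable (fun p => bvnPdf θ γ s 1 ρ p * F p)) :
    ∫ p, bvnPdf θ γ s 1 ρ p * F p = ∫ y, (∫ x, F (x, y)
      ∂gaussianReal (θ + ρ * s * (y - γ)) (bvnCondVar s ρ)) ∂gaussianReal γ 1 := by
  rw [Measure.volume_eq_prod] at hF ⊢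
  rw [integral_prod_symm _ hF, integral_gaussianReal_eq_integral_mul one_ne_zero]
  congr 1 with y
  rw [integral_gaussianReal_eq_integral_mul (bvnCondVar_ne_zero hs.ne' hρ),
    ← integral_const_mul]
  congr 1 with x
  rw [bvnPdf_eq_mul hs hρ]
  ring

variable {g : ℝ → ℝ}

lemma integrable_bvnPdf_mul_sub_sq (hs : 0 < s) (hρ : ρ ^ 2 < 1)
    (hgm : Measurable g) (hg : MemLp g 2 (gaussianReal γ 1)) :
    Integrable (fun p : ℝ × ℝ => bvnPdf θ γ s 1 ρ p * (p.1 - g p.2) ^ 2) := by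
  have hw := bvnCondVar_ne_zero hs.ne' hρ
  have hslice : ∀ y, (fun x => bvnPdf θ γ s 1 ρ (x, y) * (x - g y) ^ 2) = fun x =>
      gaussianPDFReal γ 1 y *
        (gaussianPDFReal (θ + ρ * s * (y - γ)) (bvnCondVar s ρ) x * (x - g y) ^ 2) := fun y => by
    funext x
    rw [bvnPdf_eq_mul hs hρ]
    ring
  have hb := continuous_bvnPdf θ γ s 1 ρ
  rw [Measure.volume_eq_prod]
  refine (integrable_prod_iff' (by fun_prop)).2 ⟨ae_of_all _ fun y => ?_, ?_⟩
  · rw [hslice]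
    exact ((integrable_gaussianReal_iff hw).1 (memLp_sub_gaussianReal _).integrable_sq).const_mul _
  · have hnorm : (fun y => ∫ x, ‖bvnPdf θ γ s 1 ρ (x, y) * (x - g y) ^ 2‖) = fun y =>
        gaussianPDFReal γ 1 y * (s ^ 2 * (1 - ρ ^ 2) + (θ + ρ * s * (y - γ) - g y) ^ 2) := by
      funext y
      simp_rw [Real.norm_of_nonneg (mul_nonneg (bvnPdf_nonneg hs hρ _) (sq_nonneg _))]
      rw [hslice, integral_const_mul, ← integral_gaussianReal_eq_integral_mul hw,
        integral_sub_sq_gaussianReal, coe_bvnCondVar hρ.le]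
    rw [hnorm, ← integrable_gaussianReal_iff one_ne_zero]
    exact (integrable_const _).add (((memLp_const θ).add
      ((memLp_sub_gaussianReal γ).const_mul (ρ * s))).sub hg).integrable_sq

lemma integrable_bvnPdf_mul_sub (hs : 0 < s) (hρ : ρ ^ 2 < 1)
    (hgm : Measurable g) (hg : MemLp g 2 (gaussianReal γ 1)) :
    Integrable (fun p : ℝ × ℝ => bvnPdf θ γ s 1 ρ p * (p.1 - g p.2)) := by
  have h₁ := integrable_bvnPdf_mul_sub_sq (θ := θ) hs hρ (g := fun y => g y - 1)
    (hgm.sub measurable_const) (hg.sub (memLp_const 1))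
  have h₂ := integrable_bvnPdf_mul_sub_sq (θ := θ) hs hρ (g := fun y => g y + 1)
    (hgm.add measurable_const) (hg.add (memLp_const 1))
  -- `4 t = (t + 1) ^ 2 - (t - 1) ^ 2`
  refine ((h₁.sub h₂).div_const 4).congr (ae_of_all _ fun p => ?_)
  simp only [Pi.sub_apply]
  ring

lemma integral_bvnPdf_mul_sub (hs : 0 < s) (hρ : ρ ^ 2 < 1)
    (hgm : Measurable g) (hg : MemLp g 2 (gaussianReal γ 1)) :
    ∫ p, bvnPdf θ γ s 1 ρ p * (p.1 - g p.2) =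
      ∫ y, (θ + ρ * s * (y - γ) - g y) ∂gaussianReal γ 1 := by
  rw [integral_bvnPdf_mul hs hρ (integrable_bvnPdf_mul_sub hs hρ hgm hg)]
  simp_rw [integral_sub_gaussianReal]

lemma integral_bvnPdf_mul_sub_sq (hs : 0 < s) (hρ : ρ ^ 2 < 1)
    (hgm : Measurable g) (hg : MemLp g 2 (gaussianReal γ 1)) :
    ∫ p, bvnPdf θ γ s 1 ρ p * (p.1 - g p.2) ^ 2 =
      ∫ y, (s ^ 2 * (1 - ρ ^ 2) + (θ + ρ * s * (y - γ) - g y) ^ 2) ∂gaussianReal γ 1 := by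
  rw [integral_bvnPdf_mul hs hρ (integrable_bvnPdf_mul_sub_sq hs hρ hgm hg)]
  simp_rw [integral_sub_sq_gaussianReal, coe_bvnCondVar hρ.le]

variable {h : ℝ → ℝ}

lemma integral_bvnPdf_mul_sub_mul (hs : 0 < s) (hρ : ρ ^ 2 < 1) (hhm : Measurable h)
    (hh : MemLp h 2 (gaussianReal γ 1)) :
    ∫ p, bvnPdf θ γ s 1 ρ p * (p.1 - ρ * s * h p.2) = θ - ρ * s * ∫ y, h y ∂gaussianReal γ 1 := by
  have hu := (memLp_sub_gaussianReal (μ := γ) (v := 1) γ).integrable one_le_two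
  have hθu : Integrable (fun y => θ + ρ * s * (y - γ)) (gaussianReal γ 1) :=
    (integrable_const θ).add (hu.const_mul _)
  rw [integral_bvnPdf_mul_sub hs hρ (hhm.const_mul _) (hh.const_mul _),
    integral_sub hθu ((hh.integrable one_le_two).const_mul _), integral_add (integrable_const θ)
    (hu.const_mul _), integral_const_mul, integral_const_mul, integral_sub_gaussianReal]
  simp

lemma integral_bvnPdf_mul_sub_mul_sub_integral_sq (hs : 0 < s) (hρ : ρ ^ 2 < 1)
    (hhm : Measurable h) (hh : MemLp h 2 (gaussianReal γ 1)) :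
    ∫ p, bvnPdf θ γ s 1 ρ p *
        (p.1 - ρ * s * h p.2 - (θ - ρ * s * ∫ y, h y ∂gaussianReal γ 1)) ^ 2 =
      s ^ 2 * (1 - 2 * ρ ^ 2 * ∫ y, h y * (y - γ) ∂gaussianReal γ 1 +
        ρ ^ 2 * ∫ y, (h y - ∫ z, h z ∂gaussianReal γ 1) ^ 2 ∂gaussianReal γ 1) := by
  set m := ∫ y, h y ∂gaussianReal γ 1 with hm
  have hg : MemLp (fun y => ρ * s * h y + (θ - ρ * s * m)) 2 (gaussianReal γ 1) :=
    (hh.const_mul _).add (memLp_const _)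
  have hsq : Integrable (fun y => (ρ * s) ^ 2 * ((y - γ) - (h y - m)) ^ 2) (gaussianReal γ 1) :=
    (((memLp_sub_gaussianReal γ).sub (hh.sub (memLp_const m))).integrable_sq).const_mul _
  calc ∫ p, bvnPdf θ γ s 1 ρ p * (p.1 - ρ * s * h p.2 - (θ - ρ * s * m)) ^ 2
      = ∫ p, bvnPdf θ γ s 1 ρ p * (p.1 - (ρ * s * h p.2 + (θ - ρ * s * m))) ^ 2 := by
        congr 1 with p; ring
    _ = ∫ y, (s ^ 2 * (1 - ρ ^ 2) + (θ + ρ * s * (y - γ) - (ρ * s * h y + (θ - ρ * s * m))) ^ 2)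
          ∂gaussianReal γ 1 :=
        integral_bvnPdf_mul_sub_sq hs hρ ((hhm.const_mul _).add_const _) hg
    _ = ∫ y, (s ^ 2 * (1 - ρ ^ 2) + (ρ * s) ^ 2 * ((y - γ) - (h y - m)) ^ 2)
          ∂gaussianReal γ 1 := by
        congr 1 with y; ring
    _ = s ^ 2 * (1 - ρ ^ 2) + (ρ * s) ^ 2 * ∫ y, ((y - γ) - (h y - m)) ^ 2 ∂gaussianReal γ 1 := by
        rw [integral_add (integrable_const _) hsq, integral_const, integral_const_mul]
        simp
    _ = _ := by
        rw [integral_sub_sub_integral_sq_gaussianReal hh, ← hm]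
        ring

end BivariateNormal

theorem stmt8_general {Ω : Type*} [MeasurableSpace Ω] (P : Measure Ω) [IsProbabilityMeasure P]
    (θ γ σ vθ ρ d : ℝ) (hσ : 0 < σ) (hv : 0 < vθ) (hρ : ρ ∈ Set.Ioo (-1 : ℝ) 1)
    (θhat γhat : Ω → ℝ) (hθm : Measurable θhat) (hγm : Measurable γhat)
    (hjoint : Measure.map (fun ω => (θhat ω, γhat ω)) P =
      (volume : Measure (ℝ × ℝ)).withDensity
        (fun p => ENNReal.ofReal (bvnPdf θ γ (σ * Real.sqrt vθ) 1 ρ p))) :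
    (∫ ω, ((θhat ω - ρ * σ * Real.sqrt vθ * kfun d (γhat ω)) -
        ∫ ω', (θhat ω' - ρ * σ * Real.sqrt vθ * kfun d (γhat ω')) ∂P) ^ 2 ∂P) =
      σ ^ 2 * vθ * (1 - 2 * ρ ^ 2 * (∫ z, kfun d z * (z - γ) * stdφ (z - γ)) +
        ρ ^ 2 * ∫ z, (kfun d z - mkfun d γ) ^ 2 * stdφ (z - γ)) := by
  have hs : 0 < σ * √vθ := by positivity
  have hρ₂ : ρ ^ 2 < 1 := (sq_lt_one_iff_abs_lt_one ρ).2 (abs_lt.2 hρ)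
  have hlaw := integral_comp_of_map_eq_withDensity (hθm.prodMk hγm).aemeasurable
    (continuous_bvnPdf _ _ _ _ _).measurable (bvnPdf_nonneg hs hρ₂) hjoint
  have hk := memLp_kfun d (μ := gaussianReal γ 1) 2
  have hkm := (continuous_kfun d).measurable
  simp only [mkfun, integral_mul_stdφ_sub_eq_integral_gaussianReal, mul_assoc ρ σ]
  rw [hlaw (fun p => p.1 - ρ * (σ * √vθ) * kfun d p.2) (by fun_prop),
    integral_bvnPdf_mul_sub_mul hs hρ₂ hkm hk,
    hlaw (fun p => (p.1 - ρ * (σ * √vθ) * kfun d p.2 -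
      (θ - ρ * (σ * √vθ) * ∫ y, kfun d y ∂gaussianReal γ 1)) ^ 2) (by fun_prop),
    integral_bvnPdf_mul_sub_mul_sub_integral_sq hs hρ₂ hkm hk, mul_pow, sq_sqrt hv.le]

theorem stmt8 {Ω : Type*} [MeasurableSpace Ω] (P : Measure Ω) [IsProbabilityMeasure P]
    (θ γ σ vθ ρ d : ℝ) (hσ : 0 < σ) (hv : 0 < vθ) (hρ : ρ ∈ Set.Ioo (-1 : ℝ) 1)
    (hd : 0 < d) (θhat γhat : Ω → ℝ) (hθm : Measurable θhat) (hγm : Measurable γhat)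
    (hjoint : Measure.map (fun ω => (θhat ω, γhat ω)) P =
      (volume : Measure (ℝ × ℝ)).withDensity
        (fun p => ENNReal.ofReal (bvnPdf θ γ (σ * Real.sqrt vθ) 1 ρ p))) :
    (∫ ω, ((θhat ω - ρ * σ * Real.sqrt vθ * kfun d (γhat ω)) -
        ∫ ω', (θhat ω' - ρ * σ * Real.sqrt vθ * kfun d (γhat ω')) ∂P) ^ 2 ∂P) =
      σ ^ 2 * vθ * (1 - 2 * ρ ^ 2 * (∫ z, kfun d z * (z - γ) * stdφ (z - γ)) +
        ρ ^ 2 * ∫ z, (kfun d z - mkfun d γ) ^ 2 * stdφ (z - γ)) :=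
  stmt8_general P θ γ σ vθ ρ d hσ hv hρ θhat γhat hθm hγm hjoint
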